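/- arXiv:1901.07093 — 2 statements merged into one kernel-verified Lean document; each statement's English description precedes it below -/
import Mathlib

section
/- For any subequation F ⊆ Sym²(ℝⁿ), the double dual equals F: (F̃)~ = F. -/
/-! If `F + P ⊆ F` and `1` is an interior point of the cone `P`, then each `A ∈ F` is the limit
of `A + t • 1 ∈ F + interior P ⊆ interior F` as `t → 0⁺`, so a closed such `F` equals the closure
of its interior. Complement exchanges interior and closure, and both commute with negation, so
`dual (dual F) = closure (interior F) = F`. -/

open Topology Pointwise

abbrev SymMat (n : ℕ) : Type := selfAdjoint (Matrix (Fin n) (Fin n) ℝ)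

def PSD (n : ℕ) : Set (SymMat n) := {A | (A : Matrix (Fin n) (Fin n) ℝ).PosSemidef}

def dual {n : ℕ} (F : Set (SymMat n)) : Set (SymMat n) := {A | -A ∉ interior F}

open Filter in
theorem subset_closure_interior_of_add_subset {E : Type*} [AddCommGroup E] [Module ℝ E]
    [TopologicalSpace E] [IsTopologicalAddGroup E] [ContinuousSMul ℝ E] {F P : Set E}
    (hFP : F + P ⊆ F) (hP : ∀ t : ℝ, 0 < t → t • P ⊆ P) {u : E} (hu : u ∈ interior P) :
    F ⊆ closure (interior F) := by
  have hint : F + interior P ⊆ interior F :=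
    interior_maximal ((Set.add_subset_add_left interior_subset).trans hFP)
      isOpen_interior.add_left
  intro A hA
  have htend : Tendsto (fun t : ℝ => A + t • u) (𝓝[>] 0) (𝓝 A) := by
    have : Continuous (fun t : ℝ => A + t • u) := by fun_prop
    simpa using (this.tendsto 0).mono_left nhdsWithin_le_nhds
  refine mem_closure_of_tendsto htend (eventually_nhdsWithin_of_forall fun t (ht : 0 < t) => ?_)
  have htu : t • u ∈ interior P :=
    interior_mono (hP t ht) (by rw [interior_smul₀ ht.ne']; exact Set.smul_mem_smul_set hu)
  exact hint (Set.add_mem_add hA htu)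

instance {R A : Type*} [Star R] [TrivialStar R] [AddGroup A] [StarAddMonoid A] [SMul R A]
    [StarModule R A] [TopologicalSpace R] [TopologicalSpace A] [ContinuousSMul R A] :
    ContinuousSMul R (selfAdjoint A) :=
  ⟨continuous_induced_rng.2 (continuous_fst.smul (continuous_subtype_val.comp continuous_snd))⟩

section
open scoped Matrix.Norms.L2Operator ComplexOrder

theorem Matrix.PosSemidef.one_add_of_norm_le_one {𝕜 ι : Type*} [RCLike 𝕜] [Fintype ι]
    [DecidableEq ι] {E : Matrix ι ι 𝕜} (hE : E.IsHermitian) (hnorm : ‖E‖ ≤ 1) :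
    (1 + E).PosSemidef := by
  rw [← Matrix.isPositive_toEuclideanLin_iff]
  refine ⟨Matrix.isSymmetric_toEuclideanLin_iff.mpr (Matrix.isHermitian_one.add hE), fun x => ?_⟩
  have hEx : ‖Matrix.toEuclideanLin E x‖ ≤ ‖x‖ :=
    (E.l2_opNorm_mulVec x).trans (mul_le_of_le_one_left (norm_nonneg x) hnorm)
  have hinner : -RCLike.re (inner 𝕜 (Matrix.toEuclideanLin E x) x) ≤ ‖x‖ * ‖x‖ :=
    calc _ ≤ ‖inner 𝕜 (Matrix.toEuclideanLin E x) x‖ :=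
          (neg_le_abs _).trans (RCLike.abs_re_le_norm _)
      _ ≤ ‖Matrix.toEuclideanLin E x‖ * ‖x‖ := norm_inner_le_norm _ _
      _ ≤ ‖x‖ * ‖x‖ := by gcongr
  have hone : Matrix.toEuclideanLin (1 : Matrix ι ι 𝕜) x = x := by simp
  rw [map_add, LinearMap.add_apply, inner_add_left, map_add, hone, inner_self_eq_norm_mul_norm]
  linarith

theorem one_mem_interior_PSD (n : ℕ) : (1 : SymMat n) ∈ interior (PSD n) := by
  have hopen : IsOpen {B : SymMat n | ‖(B : Matrix (Fin n) (Fin n) ℝ) - 1‖ < 1} :=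
    isOpen_lt (continuous_subtype_val.sub continuous_const).norm continuous_const
  refine interior_maximal (fun B hB => ?_) hopen (by simp)
  have hB := Matrix.PosSemidef.one_add_of_norm_le_one (B.2.sub (IsSelfAdjoint.one _)) hB.le
  simpa [PSD] using hB

end

theorem smul_PSD_subset (n : ℕ) {t : ℝ} (ht : 0 ≤ t) : t • PSD n ⊆ PSD n := by
  rintro _ ⟨A, hA, rfl⟩
  exact hA.smul ht

theorem dual_dual_eq_closure_interior {n : ℕ} (F : Set (SymMat n)) :
    dual (dual F) = closure (interior F) := by
  have hdual : dual F = (-interior F)ᶜ := rfl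
  ext A
  change -A ∉ interior (dual F) ↔ _
  rw [hdual, interior_compl, ← neg_closure, Set.notMem_compl_iff, Set.mem_neg, neg_neg]

theorem stmt2_general (n : ℕ) (F : Set (SymMat n)) (hcl : IsClosed F)
    (hpos : F + PSD n ⊆ F) : dual (dual F) = F := by
  rw [dual_dual_eq_closure_interior]
  exact (closure_minimal interior_subset hcl).antisymm <|
    subset_closure_interior_of_add_subset hpos (fun t ht => smul_PSD_subset n ht.le)
      (one_mem_interior_PSD n)

theorem stmt2 (n : ℕ) (F : Set (SymMat n)) (hcl : IsClosed F)
    (hpos : F + PSD n ⊆ F) (hne : F.Nonempty) (hproper : F ≠ Set.univ) :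
    dual (dual F) = F :=
  stmt2_general n F hcl hpos
end

section
/- If E and G are subequations with ∂E ⊆ ∂G (inclusion of topological boundaries), then E = G. -/
open Topology Pointwise

/-!
Moving from `A ∈ F` along the line `A - t • 1` one must leave the proper set `F`, and the exit
point lies on `∂F`; this gives `F ⊆ ∂F + P`, hence `E ⊆ ∂E + P ⊆ ∂G + P ⊆ G`. Conversely, if
`A ∈ G \ E`, the line `A + t • 1` enters `E` at some `t > 0`, so `A + t • 1 ∈ ∂E ⊆ ∂G`; but
`t • 1` is an interior point of `P`, so `A + t • 1 ∈ G + int P ⊆ int G`, a contradiction.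
-/

open Set
open scoped Matrix Matrix.Norms.L2Operator RealInnerProductSpace

theorem Matrix.IsHermitian.posSemidef_add_smul_one {ι : Type*} [Fintype ι] [DecidableEq ι]
    {M : Matrix ι ι ℝ} (hM : M.IsHermitian) {t : ℝ} (ht : ‖M‖ ≤ t) :
    (M + t • 1).PosSemidef := by
  refine Matrix.posSemidef_iff_dotProduct_mulVec.mpr
    ⟨hM.add (Matrix.isHermitian_one.smul (IsSelfAdjoint.all t)), fun x => ?_⟩
  set y : EuclideanSpace ℝ ι := WithLp.toLp 2 x
  have hquad : -(‖M‖ * ‖y‖ ^ 2) ≤ x ⬝ᵥ M *ᵥ x := by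
    calc -(‖M‖ * ‖y‖ ^ 2) ≤ -|⟪y, Matrix.toEuclideanCLM (𝕜 := ℝ) M y⟫| := by
          rw [neg_le_neg_iff, ← Matrix.l2_opNorm_toEuclideanCLM]
          exact (abs_real_inner_le_norm _ _).trans <|
            (mul_le_mul_of_nonneg_left (ContinuousLinearMap.le_opNorm _ _) (norm_nonneg _)).trans_eq
              (by ring)
      _ ≤ ⟪y, Matrix.toEuclideanCLM (𝕜 := ℝ) M y⟫ := neg_abs_le _
      _ = x ⬝ᵥ M *ᵥ x := Matrix.inner_toEuclideanCLM M y y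
  have hnorm : x ⬝ᵥ x = ‖y‖ ^ 2 := by
    rw [← real_inner_self_eq_norm_sq, EuclideanSpace.inner_eq_star_dotProduct]
    simp [y]
  simp only [star_trivial, Matrix.add_mulVec, Matrix.smul_mulVec, Matrix.one_mulVec,
    dotProduct_add, dotProduct_smul, smul_eq_mul, hnorm]
  nlinarith [sq_nonneg ‖y‖]

theorem add_mem_interior_of_add_subset {G : Type*} [AddGroup G] [TopologicalSpace G]
    [ContinuousConstVAdd G G] {F P : Set G} (hF : F + P ⊆ F) {a b : G} (ha : a ∈ F)
    (hb : b ∈ interior P) : a + b ∈ interior F :=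
  interior_maximal ((add_subset_add_left interior_subset).trans hF) isOpen_interior.add_left
    (add_mem_add ha hb)

theorem exists_mem_Icc_mem_frontier {X : Type*} [TopologicalSpace X] {f : ℝ → X}
    (hf : Continuous f) {H : Set X} {a b : ℝ} (hab : a ≤ b) (ha : f a ∈ H) (hb : f b ∉ H) :
    ∃ t ∈ Icc a b, f t ∈ frontier H := by
  have := isPreconnected_iff_preconnectedSpace.mp (isPreconnected_Icc (a := a) (b := b))
  let g : Icc a b → X := fun t => f t
  have hg : Continuous g := hf.comp continuous_subtype_val
  obtain ⟨t, ht⟩ := (nonempty_frontier_iff (s := g ⁻¹' H)).mpr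
    ⟨⟨⟨a, left_mem_Icc.mpr hab⟩, ha⟩, fun h => hb (h.ge (mem_univ ⟨b, right_mem_Icc.mpr hab⟩))⟩
  exact ⟨t, t.2, hg.frontier_preimage_subset H ht⟩

section SymMat

variable {n : ℕ}

theorem add_smul_one_mem_PSD {A : SymMat n} {t : ℝ} (ht : ‖A‖ ≤ t) : A + t • 1 ∈ PSD n := by
  show ((A + t • 1 : SymMat n) : Matrix (Fin n) (Fin n) ℝ).PosSemidef
  simpa using Matrix.IsHermitian.posSemidef_add_smul_one A.2 ht

theorem smul_one_mem_PSD {t : ℝ} (ht : 0 ≤ t) : t • (1 : SymMat n) ∈ PSD n := by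
  simpa using add_smul_one_mem_PSD (A := (0 : SymMat n)) (by simpa using ht)

theorem smul_one_mem_interior_PSD {t : ℝ} (ht : 0 < t) : t • (1 : SymMat n) ∈ interior (PSD n) := by
  refine mem_interior_iff_mem_nhds.mpr (Filter.mem_of_superset (Metric.ball_mem_nhds _ ht) ?_)
  intro X hX
  simpa using add_smul_one_mem_PSD (mem_ball_iff_norm.mp hX).le

variable {E F G : Set (SymMat n)}

theorem subset_frontier_add_PSD (hF : F + PSD n ⊆ F) (hFne : F ≠ univ) :
    F ⊆ frontier F + PSD n := by
  intro A hA
  obtain ⟨B, hB⟩ := ne_univ_iff_exists_notMem F |>.mp hFne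
  have hexit : A - ‖B - A‖ • 1 ∉ F := fun h => hB <| by
    simpa using hF (add_mem_add h (add_smul_one_mem_PSD (A := B - A) le_rfl))
  obtain ⟨t, ⟨ht0, -⟩, ht⟩ := exists_mem_Icc_mem_frontier (f := fun t : ℝ => A - t • 1)
    (by fun_prop) (norm_nonneg _) (by simpa using hA) hexit
  exact ⟨A - t • 1, ht, t • 1, smul_one_mem_PSD ht0, sub_add_cancel _ _⟩

theorem frontier_add_PSD_subset (hFcl : IsClosed F) (hF : F + PSD n ⊆ F) :
    frontier F + PSD n ⊆ F :=
  (add_subset_add_right hFcl.frontier_subset).trans hF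

theorem subset_of_frontier_subset_frontier (hEcl : IsClosed E) (hEpos : E + PSD n ⊆ E)
    (hEne : E.Nonempty) (hGpos : G + PSD n ⊆ G) (hbd : frontier E ⊆ frontier G) : G ⊆ E := by
  intro A hA
  by_contra hAE
  obtain ⟨C, hC⟩ := hEne
  have hentry : A + ‖A - C‖ • 1 ∈ E := by
    have := hEpos (add_mem_add hC (add_smul_one_mem_PSD (A := A - C) le_rfl))
    rwa [← add_assoc, add_sub_cancel] at this
  obtain ⟨t, ⟨ht0, -⟩, ht⟩ := exists_mem_Icc_mem_frontier (H := Eᶜ)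
    (f := fun t : ℝ => A + t • 1) (by fun_prop) (norm_nonneg _) (by simpa using hAE)
    (by simpa using hentry)
  rw [frontier_compl] at ht
  have htpos : 0 < t := ht0.lt_of_ne <| by
    rintro rfl
    exact hAE (by simpa using hEcl.frontier_subset ht)
  exact (hbd ht).2 (add_mem_interior_of_add_subset hGpos hA (smul_one_mem_interior_PSD htpos))

end SymMat

theorem stmt13_general (n : ℕ) (E G : Set (SymMat n))
    (hEcl : IsClosed E) (hEpos : E + PSD n ⊆ E) (hEne : E.Nonempty) (hEproper : E ≠ Set.univ)
    (hGcl : IsClosed G) (hGpos : G + PSD n ⊆ G)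
    (hbd : frontier E ⊆ frontier G) :
    E = G :=
  subset_antisymm
    ((subset_frontier_add_PSD hEpos hEproper).trans
      ((add_subset_add_right hbd).trans (frontier_add_PSD_subset hGcl hGpos)))
    (subset_of_frontier_subset_frontier hEcl hEpos hEne hGpos hbd)

theorem stmt13 (n : ℕ) (E G : Set (SymMat n))
    (hEcl : IsClosed E) (hEpos : E + PSD n ⊆ E) (hEne : E.Nonempty) (hEproper : E ≠ Set.univ)
    (hGcl : IsClosed G) (hGpos : G + PSD n ⊆ G) (hGne : G.Nonempty) (hGproper : G ≠ Set.univ)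
    (hbd : frontier E ⊆ frontier G) :
    E = G :=
  stmt13_general n E G hEcl hEpos hEne hEproper hGcl hGpos hbd
end
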